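/- Let W and T be real n×n matrices that are both symmetric positive definite, and let μ_min > 0 and μ_max be the smallest and largest eigenvalues of S = W^{-1/2} T W^{-1/2}. If α > (1/μ_min - μ_min)/2 and β > (μ_max - 1/μ_max)/2 with α, β > 0, then ρ(G_{α,β}) < 1. -/

import Mathlib

open Matrix

section OldSqrt

open scoped ComplexOrder

/-- The square root of a positive semidefinite matrix, as defined in the older Mathlib
(`Matrix.PosSemidef.sqrt`, removed since). -/
noncomputable def Matrix.PosSemidef.sqrt {n : Type*} [Fintype n] [DecidableEq n] {𝕜 : Type*} [RCLike 𝕜]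
    {A : Matrix n n 𝕜} (hA : A.PosSemidef) : Matrix n n 𝕜 :=
  hA.1.eigenvectorUnitary.1 * diagonal ((↑) ∘ (Real.sqrt ∘ hA.1.eigenvalues)) *
    (star hA.1.eigenvectorUnitary : Matrix n n 𝕜)

end OldSqrt

/-!
Write `W = R²` with `R = W^{1/2}` and `S = U D Uᵀ` with `U` orthogonal. Then `W = V V'` and
`T = V D V'` for `V = R U`, `V' = Uᵀ R`, so every factor of `G_{α,β}` is `V (diagonal) V'` and
`G_{α,β} = V'⁻¹ diag(g(μᵢ)) V'` with `g(μ) = (μ - β)(1 - αμ) / ((1 + βμ)(α + μ))`; its spectrum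
is `{g(μᵢ)}`. Since `x ↦ x - 1/x` is increasing, the bounds on `α, β` at `μ_min, μ_max` hold at
every eigenvalue `μ`, where they read `p = μ² + 2αμ - 1 > 0` and `q = 1 + 2βμ - μ² > 0`. Then
`2μ((1 + βμ)²(α + μ)² - (μ - β)²(1 - αμ)²) = (pq + (μ² - 1)² + 4μ²)(α + β)(1 + μ²) > 0`,
so `|g(μ)| < 1`.
-/

def ttscspMultiplier {K : Type*} [Field K] (α β μ : K) : K :=
  (1 + β * μ)⁻¹ * (μ - β) * (α + μ)⁻¹ * (1 - α * μ)

section Scalar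

variable {α β μ : ℝ}

lemma sub_one_div_le_sub_one_div {x y : ℝ} (hx : 0 < x) (hxy : x ≤ y) :
    x - 1 / x ≤ y - 1 / y := by
  linarith [one_div_le_one_div_of_le hx hxy]

lemma add_pos_of_one_div_sub_lt (hμ : 0 < μ) (hα : (1 / μ - μ) / 2 < α) : 0 < α + μ := by
  have : 0 < 1 / μ := one_div_pos.mpr hμ
  linarith

lemma one_add_mul_pos_of_sub_one_div_lt (hμ : 0 < μ) (hβ : (μ - 1 / μ) / 2 < β) :
    0 < 1 + β * μ := by
  have h : μ - 1 / μ < 2 * β := by linarith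
  have : μ * (μ - 1 / μ) = μ ^ 2 - 1 := by field_simp
  nlinarith [mul_lt_mul_of_pos_left h hμ]

lemma abs_ttscspMultiplier_lt_one (hμ : 0 < μ) (hα : (1 / μ - μ) / 2 < α)
    (hβ : (μ - 1 / μ) / 2 < β) : |ttscspMultiplier α β μ| < 1 := by
  have hp : 0 < μ ^ 2 + 2 * α * μ - 1 := by
    have : μ * (1 / μ - μ) = 1 - μ ^ 2 := by field_simp
    nlinarith [mul_lt_mul_of_pos_left hα hμ]
  have hq : 0 < 1 + 2 * β * μ - μ ^ 2 := by
    have : μ * (μ - 1 / μ) = μ ^ 2 - 1 := by field_simp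
    nlinarith [mul_lt_mul_of_pos_left hβ hμ]
  have hden : 0 < (1 + β * μ) * (α + μ) :=
    mul_pos (one_add_mul_pos_of_sub_one_div_lt hμ hβ) (add_pos_of_one_div_sub_lt hμ hα)
  have hgap : 2 * μ * (((1 + β * μ) * (α + μ)) ^ 2 - ((μ - β) * (1 - α * μ)) ^ 2) =
      ((μ ^ 2 + 2 * α * μ - 1) * (1 + 2 * β * μ - μ ^ 2) + (μ ^ 2 - 1) ^ 2 + 4 * μ ^ 2) *
        ((α + β) * (1 + μ ^ 2)) := by ring
  have hsq : ((μ - β) * (1 - α * μ)) ^ 2 < ((1 + β * μ) * (α + μ)) ^ 2 := by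
    have : 0 < α + β := by linarith
    have : 0 < 2 * μ * (((1 + β * μ) * (α + μ)) ^ 2 - ((μ - β) * (1 - α * μ)) ^ 2) := by
      rw [hgap]; positivity
    nlinarith
  have hform : ttscspMultiplier α β μ = (μ - β) * (1 - α * μ) / ((1 + β * μ) * (α + μ)) := by
    rw [ttscspMultiplier]; field_simp
  rw [hform, abs_div, abs_of_pos hden, div_lt_one hden]
  simpa [abs_of_pos hden] using sq_lt_sq.mp hsq

end Scalar

lemma spectralRadius_lt_one_of_spectrum_eq_range {𝕜 A ι : Type*} [NormedField 𝕜] [Ring A]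
    [Algebra 𝕜 A] [Finite ι] {a : A} {d : ι → 𝕜} (ha : spectrum 𝕜 a = Set.range d)
    (hd : ∀ i, ‖d i‖ < 1) : spectralRadius 𝕜 a < 1 := by
  have := Fintype.ofFinite ι
  rw [spectralRadius, ha, iSup_range, ← Finset.sup_univ_eq_iSup, Finset.sup_lt_iff zero_lt_one]
  intro i _
  exact_mod_cast hd i

namespace Matrix

variable {ι : Type*} [Fintype ι] [DecidableEq ι]

section RCLike

open scoped ComplexOrder

variable {𝕜 : Type*} [RCLike 𝕜]

lemma PosSemidef.sqrt_mul_self {A : Matrix ι ι 𝕜} (hA : A.PosSemidef) :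
    hA.sqrt * hA.sqrt = A := by
  set U : Matrix ι ι 𝕜 := (hA.1.eigenvectorUnitary : Matrix ι ι 𝕜)
  have hUU : star U * U = 1 := Unitary.star_mul_self_of_mem hA.1.eigenvectorUnitary.2
  have hsq : (fun i => ((√(hA.1.eigenvalues i) : ℝ) : 𝕜) * (√(hA.1.eigenvalues i) : ℝ)) =
      RCLike.ofReal ∘ hA.1.eigenvalues := by
    funext i
    simp [← RCLike.ofReal_mul, Real.mul_self_sqrt (hA.eigenvalues_nonneg i)]
  conv_rhs => rw [hA.1.spectral_theorem, Unitary.conjStarAlgAut_apply]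
  calc hA.sqrt * hA.sqrt
      = U * (diagonal (RCLike.ofReal ∘ (Real.sqrt ∘ hA.1.eigenvalues)) * (star U * U) *
          diagonal (RCLike.ofReal ∘ (Real.sqrt ∘ hA.1.eigenvalues))) * star U := by
        simp only [PosSemidef.sqrt, Matrix.mul_assoc]; rfl
    _ = _ := by
        rw [hUU, Matrix.mul_one, diagonal_mul_diagonal]
        simp only [Function.comp_apply, hsq]; rfl

lemma PosDef.isUnit_sqrt {A : Matrix ι ι 𝕜} (hA : A.PosDef) : IsUnit hA.posSemidef.sqrt := by
  have h := hA.isUnit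
  rw [← hA.posSemidef.sqrt_mul_self, isUnit_iff_isUnit_det, det_mul, IsUnit.mul_iff] at h
  exact (isUnit_iff_isUnit_det _).mpr h.1

lemma IsHermitian.eq_mul_diagonal_mul_of_inv_mul_mul_inv {R T : Matrix ι ι 𝕜} (hR : IsUnit R)
    (hS : (R⁻¹ * T * R⁻¹).IsHermitian) :
    T = R * (hS.eigenvectorUnitary : Matrix ι ι 𝕜) * diagonal (RCLike.ofReal ∘ hS.eigenvalues) *
      (star (hS.eigenvectorUnitary : Matrix ι ι 𝕜) * R) := by
  have hRdet := (isUnit_iff_isUnit_det R).mp hR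
  have hT : T = R * (R⁻¹ * T * R⁻¹) * R := by
    simp only [Matrix.mul_assoc, mul_nonsing_inv_cancel_left _ _ hRdet, nonsing_inv_mul _ hRdet,
      Matrix.mul_one]
  have hS' := hS.spectral_theorem
  rw [Unitary.conjStarAlgAut_apply] at hS'
  calc T = R * (R⁻¹ * T * R⁻¹) * R := hT
    _ = R * ((hS.eigenvectorUnitary : Matrix ι ι 𝕜) * diagonal (RCLike.ofReal ∘ hS.eigenvalues) *
          star (hS.eigenvectorUnitary : Matrix ι ι 𝕜)) * R := congrArg (fun X => R * X * R) hS'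
    _ = _ := by simp only [Matrix.mul_assoc]

end RCLike

variable {K : Type*} [Field K]

lemma map_nonsing_inv {L : Type*} [Field L] (f : K →+* L) (A : Matrix ι ι K) :
    A⁻¹.map f = (A.map f)⁻¹ := by
  have hadj := f.map_adjugate A
  have hdet := f.map_det A
  simp only [RingHom.mapMatrix_apply] at hadj hdet
  simp only [inv_def, Ring.inverse_eq_inv']
  rw [← hadj, ← hdet, ← map_inv₀ f]
  ext i j
  simp

lemma spectrum_map_inv_mul_diagonal_mul {L : Type*} [Field L] (f : K →+* L)
    {P : Matrix ι ι K} (hP : IsUnit P) (d : ι → K) :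
    spectrum L ((P⁻¹ * diagonal d * P).map f) = Set.range (f ∘ d) := by
  rw [Matrix.map_mul, Matrix.map_mul, map_nonsing_inv, diagonal_map (map_zero f)]
  obtain ⟨u, hu⟩ := hP.map f.mapMatrix
  rw [RingHom.mapMatrix_apply] at hu
  rw [← hu, ← coe_units_inv, spectrum.units_conjugate', spectrum_diagonal]
  rfl

lemma inv_mul_diagonal_mul_inv {V V' : Matrix ι ι K} {d : ι → K} (hd : ∀ i, d i ≠ 0) :
    (V * diagonal d * V')⁻¹ = V'⁻¹ * diagonal (fun i => (d i)⁻¹) * V⁻¹ := by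
  have hinv : (diagonal d)⁻¹ = diagonal (fun i => (d i)⁻¹) := by
    refine inv_eq_left_inv ?_
    rw [diagonal_mul_diagonal]
    simp [inv_mul_cancel₀ (hd _)]
  rw [mul_inv_rev, mul_inv_rev, hinv, Matrix.mul_assoc]

section Congruence

variable {W T V V' : Matrix ι ι K} {d : ι → K}

lemma smul_add_smul_eq_of_congr_diagonal (hW : W = V * V') (hT : T = V * diagonal d * V')
    (a b : K) : a • W + b • T = V * diagonal (fun i => a + b * d i) * V' := by
  have hdiag : diagonal (fun i => a + b * d i) = a • 1 + b • diagonal d := by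
    rw [smul_one_eq_diagonal, ← diagonal_smul, diagonal_add]; rfl
  rw [hW, hT, hdiag]
  simp only [Matrix.mul_add, Matrix.add_mul, Matrix.mul_smul, Matrix.smul_mul, Matrix.mul_one]

lemma ttscsp_iteration_eq_inv_mul_diagonal_mul (hV : IsUnit V) (hV' : IsUnit V') (hW : W = V * V')
    (hT : T = V * diagonal d * V') {α β : K} (hβ : ∀ i, 1 + β * d i ≠ 0) (hα : ∀ i, α + d i ≠ 0) :
    (W + β • T)⁻¹ * (T - β • W) * (α • W + T)⁻¹ * (W - α • T) =
      V'⁻¹ * diagonal (fun i => ttscspMultiplier α β (d i)) * V' := by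
  have e1 : W + β • T = V * diagonal (fun i => 1 + β * d i) * V' := by
    simpa using smul_add_smul_eq_of_congr_diagonal hW hT 1 β
  have e2 : T - β • W = V * diagonal (fun i => d i - β) * V' := by
    simpa [sub_eq_neg_add] using smul_add_smul_eq_of_congr_diagonal hW hT (-β) 1
  have e3 : α • W + T = V * diagonal (fun i => α + d i) * V' := by
    simpa using smul_add_smul_eq_of_congr_diagonal hW hT α 1
  have e4 : W - α • T = V * diagonal (fun i => 1 - α * d i) * V' := by
    simpa [sub_eq_add_neg] using smul_add_smul_eq_of_congr_diagonal hW hT 1 (-α)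
  have hVdet := (isUnit_iff_isUnit_det V).mp hV
  have hV'det := (isUnit_iff_isUnit_det V').mp hV'
  rw [e1, e2, e3, e4, inv_mul_diagonal_mul_inv hβ, inv_mul_diagonal_mul_inv hα]
  simp only [Matrix.mul_assoc, nonsing_inv_mul_cancel_left _ _ hVdet,
    mul_nonsing_inv_cancel_left _ _ hV'det]
  simp only [← Matrix.mul_assoc, diagonal_mul_diagonal]
  simp only [ttscspMultiplier, mul_assoc]

end Congruence

end Matrix

theorem ttscsp_convergence_cor1_general
    {n : ℕ}
    (W T : Matrix (Fin n) (Fin n) ℝ)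
    (hW : W.PosDef)
    (S : Matrix (Fin n) (Fin n) ℝ)
    (hSdef : S = (hW.posSemidef.sqrt)⁻¹ * T * (hW.posSemidef.sqrt)⁻¹)
    (hS : S.IsHermitian)
    (μmin μmax : ℝ)
    (hμmin : μmin = ⨅ i, hS.eigenvalues i)
    (hμmax : μmax = ⨆ i, hS.eigenvalues i)
    (hμminpos : 0 < μmin)
    (α β : ℝ)
    (hαlow : (1 / μmin - μmin) / 2 < α)
    (hβlow : (μmax - 1 / μmax) / 2 < β) :
    spectralRadius ℂ
      (((W + β • T)⁻¹ * (T - β • W) * (α • W + T)⁻¹ * (W - α • T)).map Complex.ofReal) < 1 := by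
  subst hSdef
  set R := hW.posSemidef.sqrt
  set U : Matrix (Fin n) (Fin n) ℝ := (hS.eigenvectorUnitary : Matrix (Fin n) (Fin n) ℝ)
  set μ := hS.eigenvalues
  have hR : IsUnit R := hW.isUnit_sqrt
  have hU : IsUnit U := Unitary.isUnit_coe
  have hWc : W = R * U * (star U * R) := by
    rw [Matrix.mul_assoc, ← Matrix.mul_assoc U,
      Unitary.mul_star_self_of_mem hS.eigenvectorUnitary.2, Matrix.one_mul,
      hW.posSemidef.sqrt_mul_self]
  have hTc : T = R * U * diagonal μ * (star U * R) := by
    simpa [RCLike.ofReal_real_eq_id] using hS.eq_mul_diagonal_mul_of_inv_mul_mul_inv hR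
  have hμ : ∀ i, 0 < μ i ∧ (1 / μ i - μ i) / 2 < α ∧ (μ i - 1 / μ i) / 2 < β := by
    intro i
    have hlo : μmin ≤ μ i := hμmin ▸ ciInf_le (Set.finite_range μ).bddBelow i
    have hhi : μ i ≤ μmax := hμmax ▸ le_ciSup (Set.finite_range μ).bddAbove i
    have hpos : 0 < μ i := hμminpos.trans_le hlo
    refine ⟨hpos, ?_, ?_⟩
    · linarith [sub_one_div_le_sub_one_div hμminpos hlo]
    · linarith [sub_one_div_le_sub_one_div hpos hhi]
  rw [Matrix.ttscsp_iteration_eq_inv_mul_diagonal_mul (hR.mul hU) (hU.star.mul hR) hWc hTc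
    (fun i => (one_add_mul_pos_of_sub_one_div_lt (hμ i).1 (hμ i).2.2).ne')
    (fun i => (add_pos_of_one_div_sub_lt (hμ i).1 (hμ i).2.1).ne')]
  refine spectralRadius_lt_one_of_spectrum_eq_range
    (Matrix.spectrum_map_inv_mul_diagonal_mul Complex.ofRealHom (hU.star.mul hR) _) fun i => ?_
  simpa using abs_ttscspMultiplier_lt_one (hμ i).1 (hμ i).2.1 (hμ i).2.2

/-- **Corollary 1.** If both `W` and `T` are symmetric positive definite and `μmin > 0`,
`μmax` are the extreme eigenvalues of `S = W^{-1/2} T W^{-1/2}`, then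
`α > (1/μmin - μmin)/2` and `β > (μmax - 1/μmax)/2` (with `α, β > 0`) imply that the
spectral radius of the TTSCSP iteration matrix is less than one. -/
theorem ttscsp_convergence_cor1
    {n : ℕ} (hn : 0 < n)
    (W T : Matrix (Fin n) (Fin n) ℝ)
    (hW : W.PosDef) (hT : T.PosDef)
    (S : Matrix (Fin n) (Fin n) ℝ)
    (hSdef : S = (hW.posSemidef.sqrt)⁻¹ * T * (hW.posSemidef.sqrt)⁻¹)
    (hS : S.IsHermitian)
    (μmin μmax : ℝ)
    (hμmin : μmin = ⨅ i, hS.eigenvalues i)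
    (hμmax : μmax = ⨆ i, hS.eigenvalues i)
    (hμminpos : 0 < μmin)
    (α β : ℝ) (hα : 0 < α) (hβ : 0 < β)
    (hαlow : (1 / μmin - μmin) / 2 < α)
    (hβlow : (μmax - 1 / μmax) / 2 < β) :
    spectralRadius ℂ
      (((W + β • T)⁻¹ * (T - β • W) * (α • W + T)⁻¹ * (W - α • T)).map Complex.ofReal) < 1 :=
  ttscsp_convergence_cor1_general W T hW S hSdef hS μmin μmax hμmin hμmax hμminpos α β hαlow hβlow
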